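/- Let T ≥ 2 and d ≥ 1 be integers, let u_0, …, u_{T−1} be d×d unitary matrices with u_{T−1} = I, and set U_{t:0} = u_{t−1}⋯u_0 (U_{0:0} = I). On ℂ^d ⊗ ℂ^T, for a d×d unitary W and 0 ≤ t ≤ T−1 define the controlled unitary C_t(W) = W ⊗ E_{t,t} + I_d ⊗ (I_T − E_{t,t}), and define V = C_0(U_{0:0}) C_1(U_{1:0}) ⋯ C_{T−1}(U_{T−1:0}). Then: (a) for every 0 ≤ t ≤ T−2, V (I_d ⊗ E_{t+1,t}) V† = u_t ⊗ E_{t+1,t}; and (b) V† (I_d ⊗ E_{0,T−1}) V = U_{T:0} ⊗ E_{0,T−1}. -/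

import Mathlib

open Kronecker Complex Matrix

noncomputable section

/-- Forward propagator `U_{t:0} = u_{t-1} ⋯ u_0` (with `U_{0:0} = I`). -/
def fkProp {d : ℕ} (u : ℕ → Matrix (Fin d) (Fin d) ℂ) : ℕ → Matrix (Fin d) (Fin d) ℂ
  | 0 => 1
  | t + 1 => u t * fkProp u t

/-- Matrix unit `E_{s,t}` on the clock space `ℂ^T`. -/
def matUnit {T : ℕ} (s t : Fin T) : Matrix (Fin T) (Fin T) ℂ :=
  Matrix.single s t 1

/-- The controlled unitary `C_t(W) = W ⊗ E_{t,t} + I_d ⊗ (I_T − E_{t,t})` on `ℂ^d ⊗ ℂ^T`. -/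
def ctrl {d T : ℕ} (W : Matrix (Fin d) (Fin d) ℂ) (t : Fin T) :
    Matrix (Fin d × Fin T) (Fin d × Fin T) ℂ :=
  W ⊗ₖ matUnit t t + (1 : Matrix (Fin d) (Fin d) ℂ) ⊗ₖ ((1 : Matrix (Fin T) (Fin T) ℂ) - matUnit t t)

/-- The entangler circuit `V = C_0(U_{0:0}) C_1(U_{1:0}) ⋯ C_{T−1}(U_{T−1:0})`. -/
def entangler (d T : ℕ) [NeZero T] (u : ℕ → Matrix (Fin d) (Fin d) ℂ) :
    Matrix (Fin d × Fin T) (Fin d × Fin T) ℂ :=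
  (((List.range T).map fun t => ctrl (fkProp u t) (Fin.ofNat T t))).prod

section Aux

variable {d T : ℕ}

lemma matUnit_conjT (s t : Fin T) : (matUnit s t)ᴴ = matUnit t s := by
  ext i j
  simp only [matUnit, conjTranspose_apply, Matrix.single, Matrix.of_apply]
  by_cases h1 : t = i <;> by_cases h2 : s = j <;> simp [h1, h2]

lemma matUnit_mul_same (a b c : Fin T) :
    matUnit a b * matUnit b c = matUnit a c := by
  simpa [matUnit] using
    Matrix.single_mul_single_same (i := a) (j := b) (c := (1 : ℂ)) c 1

lemma matUnit_mul_ne (a : Fin T) {b b' : Fin T} (h : b ≠ b') (c : Fin T) :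
    matUnit a b * matUnit b' c = 0 := by
  simpa [matUnit] using
    (Matrix.single_mul_single_of_ne (c := (1 : ℂ)) a b b' h 1 :
      Matrix.single a b (1 : ℂ) * Matrix.single b' c 1 = 0)

lemma kron_conjT (A : Matrix (Fin d) (Fin d) ℂ) (B : Matrix (Fin T) (Fin T) ℂ) :
    (A ⊗ₖ B)ᴴ = Aᴴ ⊗ₖ Bᴴ := by
  ext ⟨i, s⟩ ⟨j, r⟩
  simp [conjTranspose_apply, kronecker_apply]

lemma kron_sub_right (A : Matrix (Fin d) (Fin d) ℂ) (B C : Matrix (Fin T) (Fin T) ℂ) :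
    A ⊗ₖ (B - C) = A ⊗ₖ B - A ⊗ₖ C := by
  rw [eq_sub_iff_add_eq, ← kronecker_add, show B - C + C = B by abel]

lemma sub_kron (A B : Matrix (Fin d) (Fin d) ℂ) (C : Matrix (Fin T) (Fin T) ℂ) :
    (A - B) ⊗ₖ C = A ⊗ₖ C - B ⊗ₖ C := by
  rw [eq_sub_iff_add_eq, ← add_kronecker, show A - B + B = A by abel]

lemma one_eq_sum_kron [NeZero T] :
    (1 : Matrix (Fin d × Fin T) (Fin d × Fin T) ℂ)
      = ∑ s : Fin T, (1 : Matrix (Fin d) (Fin d) ℂ) ⊗ₖ matUnit s s := by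
  ext ⟨i, s⟩ ⟨j, r⟩
  simp only [Matrix.sum_apply, kronecker_apply, Matrix.one_apply, matUnit,
    Matrix.single, Matrix.of_apply, Prod.mk.injEq]
  rw [Finset.sum_eq_single s]
  · by_cases h1 : i = j <;> by_cases h2 : s = r <;> simp [h1, h2]
  · intro b _ hb
    simp [hb]
  · simp

lemma sum_kron_mul (f : Fin T → Matrix (Fin d) (Fin d) ℂ)
    (A : Matrix (Fin d) (Fin d) ℂ) (a b : Fin T) :
    (∑ s : Fin T, f s ⊗ₖ matUnit s s) * (A ⊗ₖ matUnit a b)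
      = (f a * A) ⊗ₖ matUnit a b := by
  rw [Finset.sum_mul, Finset.sum_eq_single a]
  · rw [← mul_kronecker_mul, matUnit_mul_same]
  · intro s _ hs
    rw [← mul_kronecker_mul, matUnit_mul_ne _ hs, kronecker_zero]
  · simp

lemma kron_mul_sum (f : Fin T → Matrix (Fin d) (Fin d) ℂ)
    (A : Matrix (Fin d) (Fin d) ℂ) (a b : Fin T) :
    (A ⊗ₖ matUnit a b) * (∑ s : Fin T, f s ⊗ₖ matUnit s s)
      = (A * f b) ⊗ₖ matUnit a b := by
  rw [Finset.mul_sum, Finset.sum_eq_single b]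
  · rw [← mul_kronecker_mul, matUnit_mul_same]
  · intro s _ hs
    rw [← mul_kronecker_mul, matUnit_mul_ne _ (Ne.symm hs), kronecker_zero]
  · simp

lemma prod_range_eq_sum [NeZero T] (u : ℕ → Matrix (Fin d) (Fin d) ℂ)
    (n : ℕ) (hn : n ≤ T) :
    (((List.range n).map fun t => ctrl (fkProp u t) (Fin.ofNat T t))).prod
      = ∑ s : Fin T,
          (if (s : ℕ) < n then fkProp u (s : ℕ) else 1) ⊗ₖ matUnit s s := by
  induction n with
  | zero =>
    simp only [List.range_zero, List.map_nil, List.prod_nil, Nat.not_lt_zero, if_false]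
    exact one_eq_sum_kron
  | succ n ih =>
    have hnT : n < T := hn
    have ht : ((Fin.ofNat T n) : ℕ) = n := by
      rw [Fin.val_ofNat]; exact Nat.mod_eq_of_lt hnT
    rw [List.range_succ, List.map_append, List.prod_append, List.map_singleton,
      List.prod_singleton, ih (le_of_lt hnT)]
    rw [ctrl, mul_add, kron_sub_right, mul_sub, sum_kron_mul, one_kronecker_one,
      mul_one, sum_kron_mul, ht]
    simp only [lt_irrefl n, if_false, one_mul, mul_one]
    have hterm : ∀ s : Fin T,
        (if (s : ℕ) < n + 1 then fkProp u (s : ℕ) else 1) ⊗ₖ matUnit s s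
          = (if (s : ℕ) < n then fkProp u (s : ℕ) else 1) ⊗ₖ matUnit s s
            + (if s = (Fin.ofNat T n)
                then (fkProp u n - 1) ⊗ₖ matUnit (Fin.ofNat T n) (Fin.ofNat T n)
                else 0) := by
      intro s
      by_cases hs : s = (Fin.ofNat T n)
      · subst hs
        rw [if_pos rfl, ht, if_pos (Nat.lt_succ_self n), if_neg (lt_irrefl n),
          ← add_kronecker, show (1 : Matrix (Fin d) (Fin d) ℂ) + (fkProp u n - 1)
            = fkProp u n by abel]
      · have hsn : (s : ℕ) ≠ n := fun hc => hs (Fin.ext (hc.trans ht.symm))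
        have hiff : ((s : ℕ) < n + 1) ↔ ((s : ℕ) < n) := by omega
        rw [if_neg hs, add_zero, if_congr hiff rfl rfl]
    rw [Finset.sum_congr rfl (fun s _ => hterm s), Finset.sum_add_distrib,
      Finset.sum_ite_eq' Finset.univ (Fin.ofNat T n)
        (fun _ => (fkProp u n - 1) ⊗ₖ matUnit (Fin.ofNat T n) (Fin.ofNat T n))]
    simp only [Finset.mem_univ, if_pos]
    rw [sub_kron]
    abel

lemma entangler_eq_sum [NeZero T] (u : ℕ → Matrix (Fin d) (Fin d) ℂ) :
    entangler d T u = ∑ s : Fin T, fkProp u (s : ℕ) ⊗ₖ matUnit s s := by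
  rw [entangler, prod_range_eq_sum u T le_rfl]
  exact Finset.sum_congr rfl fun s _ => by rw [if_pos s.isLt]

lemma fkProp_unitary (u : ℕ → Matrix (Fin d) (Fin d) ℂ) (n : ℕ)
    (hu : ∀ k, k < n → u k ∈ Matrix.unitaryGroup (Fin d) ℂ) :
    fkProp u n * (fkProp u n)ᴴ = 1 := by
  induction n with
  | zero => simp [fkProp]
  | succ n ih =>
    have h1 : u n * (u n)ᴴ = 1 := by
      have := (Matrix.mem_unitaryGroup_iff.mp (hu n (Nat.lt_succ_self n)))
      rwa [Matrix.star_eq_conjTranspose] at this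
    have ih' := ih (fun k hk => hu k (hk.trans (Nat.lt_succ_self n)))
    rw [fkProp, conjTranspose_mul, mul_assoc, ← mul_assoc (fkProp u n), ih',
      one_mul, h1]

end Aux

/-- With `u_{T−1} = I`, the circuit `V` conjugates the bare clock hopping
terms into the dressed ones: (a) `V (I ⊗ E_{t+1,t}) V† = u_t ⊗ E_{t+1,t}` for `t ≤ T−2`, and
(b) `V† (I ⊗ E_{0,T−1}) V = U_{T:0} ⊗ E_{0,T−1}`. -/
theorem entangler_conjugation
    (T d : ℕ) [NeZero T] (hT : 2 ≤ T) (hd : 1 ≤ d)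
    (u : ℕ → Matrix (Fin d) (Fin d) ℂ)
    (hu : ∀ t, t < T → u t ∈ Matrix.unitaryGroup (Fin d) ℂ)
    (hlast : u (T - 1) = 1) :
    (∀ t : Fin T, (t : ℕ) + 1 < T →
      entangler d T u * ((1 : Matrix (Fin d) (Fin d) ℂ) ⊗ₖ matUnit (t + 1) t) *
          (entangler d T u)ᴴ = (u (t : ℕ)) ⊗ₖ matUnit (t + 1) t) ∧
    (entangler d T u)ᴴ *
        ((1 : Matrix (Fin d) (Fin d) ℂ) ⊗ₖ matUnit (0 : Fin T) (⟨T - 1, by omega⟩ : Fin T)) *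
        entangler d T u =
      (fkProp u T) ⊗ₖ matUnit (0 : Fin T) (⟨T - 1, by omega⟩ : Fin T) := by
  have hVsum := entangler_eq_sum (T := T) u
  have hVconj : (entangler d T u)ᴴ
      = ∑ s : Fin T, (fkProp u (s : ℕ))ᴴ ⊗ₖ matUnit s s := by
    rw [hVsum, conjTranspose_sum]
    exact Finset.sum_congr rfl fun s _ => by rw [kron_conjT, matUnit_conjT]
  constructor
  · intro t hst
    obtain ⟨T', rfl⟩ : ∃ T', T = T' + 1 := ⟨T - 1, by omega⟩
    have hval : ((t + 1 : Fin (T' + 1)) : ℕ) = (t : ℕ) + 1 := by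
      apply Fin.val_add_one_of_lt
      exact Fin.lt_iff_val_lt_val.mpr (by simp [Fin.val_last]; omega)
    rw [hVconj, hVsum, sum_kron_mul, mul_one, kron_mul_sum, hval]
    congr 1
    rw [fkProp, mul_assoc, fkProp_unitary u (t : ℕ)
      (fun k hk => hu k (by omega)), mul_one]
  · rw [hVconj, hVsum, sum_kron_mul, mul_one, kron_mul_sum]
    have h1 : (fkProp u ((0 : Fin T) : ℕ))ᴴ *
        fkProp u ((⟨T - 1, by omega⟩ : Fin T) : ℕ) = fkProp u T := by
      show (fkProp u 0)ᴴ * fkProp u (T - 1) = fkProp u T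
      obtain ⟨T', rfl⟩ : ∃ T', T = T' + 1 := ⟨T - 1, by omega⟩
      simp only [Nat.add_sub_cancel] at hlast ⊢
      rw [show fkProp u 0 = 1 from rfl, conjTranspose_one, one_mul, fkProp, hlast, one_mul]
    rw [h1]
end
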